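/- arXiv:1705.06360 — 3 statements merged into one kernel-verified Lean document; each statement's English description precedes it below -/
import Mathlib

section
/- For every real λ ≠ 0, the quantity δ(λ) = 1/λ + 1/(1 - exp(λ)) satisfies 0 < δ(λ) < 1. -/
/-- The Chang-Cooper weight δ(λ) = 1/λ + 1/(1 - e^λ) satisfies 0 < δ(λ) < 1 for λ ≠ 0. -/
theorem chang_cooper_weight_bounds (lam : ℝ) (h : lam ≠ 0) :
    0 < 1 / lam + 1 / (1 - Real.exp lam) ∧ 1 / lam + 1 / (1 - Real.exp lam) < 1 := by
  set E := Real.exp lam with hE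
  have hEpos : 0 < E := Real.exp_pos lam
  have h1 : lam + 1 < E := Real.add_one_lt_exp h
  have h2' : -lam + 1 < E⁻¹ := by
    have := Real.add_one_lt_exp (neg_ne_zero.mpr h)
    rwa [Real.exp_neg, ← hE] at this
  have h2 : E * (1 - lam) < 1 := by
    have := mul_lt_mul_of_pos_left h2' hEpos
    rw [mul_inv_cancel₀ (ne_of_gt hEpos)] at this
    linarith
  have hden : lam * (1 - E) < 0 := by
    rcases h.lt_or_gt with hl | hl
    · have hE1 : E < 1 := by
        rw [hE]; exact Real.exp_lt_one_iff.mpr hl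
      exact mul_neg_of_neg_of_pos hl (by linarith)
    · have hE1 : 1 < E := by linarith
      exact mul_neg_of_pos_of_neg hl (by linarith)
  have hlamne : lam ≠ 0 := h
  have hEne : 1 - E ≠ 0 := by
    intro hc
    nlinarith
  have key : 1 / lam + 1 / (1 - E) = (1 - E + lam) / (lam * (1 - E)) := by
    field_simp
  constructor
  · rw [key]
    exact div_pos_of_neg_of_neg (by linarith) hden
  · rw [key, div_lt_one_of_neg hden]
    linarith
end

section
/- Suppose the Chang-Cooper exponent satisfies λ_{i+1/2} = log(f^∞_i) − log(f^∞_{i+1}) for a positive steady state f^∞. Then the Chang-Cooper flux F_{i+1/2} = (D/Δw)·[λ·((1−δ)f^∞_{i+1} + δ f^∞_i) + (f^∞_{i+1} − f^∞_i)] with δ = 1/λ + 1/(1 − e^λ) vanishes when evaluated at f = f^∞. -/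
/-- The Chang-Cooper flux vanishes at the steady state: with a = f^∞_i, b = f^∞_{i+1} > 0
distinct, λ = log(a/b), δ = 1/λ + 1/(1−e^λ), D > 0, Δw > 0:
(D/Δw)·(λ·((1−δ)·b + δ·a) + (b − a)) = 0. -/
theorem flux_vanishes_at_steady_state (a b D Δw : ℝ) (ha : 0 < a) (hb : 0 < b) (hab : a ≠ b)
    (hD : 0 < D) (hΔw : 0 < Δw) (lam δ : ℝ) (hlam : lam = Real.log (a / b))
    (hδ : δ = 1 / lam + 1 / (1 - Real.exp lam)) :
    D / Δw * (lam * ((1 - δ) * b + δ * a) + (b - a)) = 0 := by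
  have hexp : Real.exp lam = a / b := by
    rw [hlam, Real.exp_log (div_pos ha hb)]
  have hne : a / b ≠ 1 := by
    intro h
    exact hab (by field_simp at h; linarith)
  have hlam0 : lam ≠ 0 := by
    intro h
    rw [h, Real.exp_zero] at hexp
    exact hne hexp.symm
  have h1 : 1 - Real.exp lam = (b - a) / b := by
    rw [hexp]; field_simp
  have hba : b - a ≠ 0 := fun h => hab (by linarith)
  rw [hδ, h1]
  field_simp
  ring
end

section
/- The function δ(λ) = 1/λ + 1/(1 − e^λ) is monotonically decreasing on ℝ \ {0}, with limit 1 as λ → −∞ and limit 0 as λ → +∞. -/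
/-!
Put `t = λ / 2`, so that `1 - e^λ = -2 e^t sinh t`. Then `δ'(λ) = -1/λ² + 1/(2 sinh t)²`, which
is negative because `|sinh t| > |t|`; so `δ` decreases on each half-line. The two branches are
separated by the value `1/2`: `δ(λ) - 1/2 = -(t cosh t - sinh t) / (2 t sinh t)`, and
`t cosh t - sinh t` is odd and increasing, so `δ > 1/2` for `λ < 0` and `δ < 1/2` for `λ > 0`.
-/

open Real Filter Set

namespace Real

theorem one_sub_exp_eq_mul_sinh_half (x : ℝ) : 1 - exp x = -(2 * exp (x / 2) * sinh (x / 2)) := by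
  rw [sinh_eq]
  have : exp (x / 2) * exp (x / 2) = exp x := by rw [← exp_add]; ring_nf
  have h2 : exp (x / 2) * exp (-(x / 2)) = 1 := by rw [← exp_add]; simp
  linear_combination this - h2

theorem strictMono_mul_cosh_sub_sinh : StrictMono fun t => t * cosh t - sinh t := by
  refine strictMono_of_odd_strictMonoOn_nonneg (fun t => by simp; ring) ?_
  refine strictMonoOn_of_hasDerivWithinAt_pos (f' := fun t => t * sinh t) (convex_Ici 0)
    (by fun_prop) (fun t _ => ?_) fun t ht => ?_
  · exact (((hasDerivAt_id t).mul (hasDerivAt_cosh t)).sub (hasDerivAt_sinh t)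
      |>.congr_deriv (by simp)).hasDerivWithinAt
  · rw [interior_Ici, mem_Ioi] at ht
    exact mul_pos ht (sinh_pos_iff.2 ht)

theorem sinh_lt_mul_cosh_iff {t : ℝ} : sinh t < t * cosh t ↔ 0 < t := by
  simpa using strictMono_mul_cosh_sub_sinh.lt_iff_lt (a := 0) (b := t)

theorem mul_cosh_lt_sinh_iff {t : ℝ} : t * cosh t < sinh t ↔ t < 0 := by
  simpa using strictMono_mul_cosh_sub_sinh.lt_iff_lt (a := t) (b := 0)

theorem mul_sinh_pos {t : ℝ} (ht : t ≠ 0) : 0 < t * sinh t := by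
  rcases ht.lt_or_gt with h | h
  · exact mul_pos_of_neg_of_neg h (sinh_neg_iff.2 h)
  · exact mul_pos h (sinh_pos_iff.2 h)

theorem abs_lt_abs_sinh {t : ℝ} (ht : t ≠ 0) : |t| < |sinh t| := by
  rw [abs_sinh, self_lt_sinh_iff]; exact abs_pos.2 ht

end Real

noncomputable def ccWeight (lam : ℝ) : ℝ := 1 / lam + 1 / (1 - exp lam)

theorem ccWeight_eq_half_sub_div {x : ℝ} (hx : x ≠ 0) :
    ccWeight x = 1 / 2 - (x / 2 * cosh (x / 2) - sinh (x / 2)) / (x * sinh (x / 2)) := by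
  have hs : sinh (x / 2) ≠ 0 := sinh_ne_zero.2 (by simpa using hx)
  have he := (exp_pos (x / 2)).ne'
  have hc : cosh (x / 2) = sinh (x / 2) + exp (-(x / 2)) := by rw [cosh_eq, sinh_eq]; ring
  rw [ccWeight, one_sub_exp_eq_mul_sinh_half, hc, exp_neg]
  field_simp
  ring

theorem mul_sinh_half_pos {x : ℝ} (hx : x ≠ 0) : 0 < x * sinh (x / 2) := by
  have := mul_sinh_pos (t := x / 2) (by simpa using hx)
  linarith

theorem ccWeight_lt_half {x : ℝ} (hx : 0 < x) : ccWeight x < 1 / 2 := by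
  rw [ccWeight_eq_half_sub_div hx.ne', sub_lt_self_iff]
  refine div_pos ?_ (mul_sinh_half_pos hx.ne')
  linarith [sinh_lt_mul_cosh_iff.2 (half_pos hx)]

theorem half_lt_ccWeight {x : ℝ} (hx : x < 0) : 1 / 2 < ccWeight x := by
  have hnum : x / 2 * cosh (x / 2) - sinh (x / 2) < 0 := by
    linarith [mul_cosh_lt_sinh_iff.2 (by linarith : x / 2 < 0)]
  rw [ccWeight_eq_half_sub_div hx.ne]
  linarith [div_neg_of_neg_of_pos hnum (mul_sinh_half_pos hx.ne)]

theorem hasDerivAt_ccWeight {x : ℝ} (hx : x ≠ 0) :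
    HasDerivAt ccWeight (-(x ^ 2)⁻¹ + ((2 * sinh (x / 2)) ^ 2)⁻¹) x := by
  have hd : 1 - exp x ≠ 0 := sub_ne_zero.2 (Ne.symm ((exp_eq_one_iff x).not.2 hx))
  have h := (hasDerivAt_inv hx).add (((hasDerivAt_exp x).const_sub 1).inv hd)
  refine (h.congr_deriv ?_).congr_of_eventuallyEq (.of_forall fun y => by simp [ccWeight])
  have hsq : exp x = exp (x / 2) ^ 2 := by rw [← exp_nat_mul]; ring_nf
  have hs : sinh (x / 2) ≠ 0 := sinh_ne_zero.2 (by simpa using hx)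
  rw [one_sub_exp_eq_mul_sinh_half, hsq, neg_neg, neg_sq]
  field_simp

theorem ccWeight_deriv_neg {x : ℝ} (hx : x ≠ 0) :
    -(x ^ 2)⁻¹ + ((2 * sinh (x / 2)) ^ 2)⁻¹ < 0 := by
  have h := abs_lt_abs_sinh (t := x / 2) (by simpa using hx)
  have hsq : x ^ 2 < (2 * sinh (x / 2)) ^ 2 := by
    rw [sq_lt_sq, abs_mul, abs_two]
    rw [abs_div, abs_two] at h
    linarith
  linarith [inv_strictAnti₀ (by positivity) hsq]

theorem strictAntiOn_ccWeight_of_convex {s : Set ℝ} (hs : Convex ℝ s) (h0 : (0 : ℝ) ∉ s) :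
    StrictAntiOn ccWeight s := by
  have hne {x} (hx : x ∈ s) : x ≠ 0 := ne_of_mem_of_not_mem hx h0
  refine strictAntiOn_of_hasDerivWithinAt_neg hs
    (fun x hx => (hasDerivAt_ccWeight (hne hx)).continuousAt.continuousWithinAt)
    (fun x hx => (hasDerivAt_ccWeight (hne (interior_subset hx))).hasDerivWithinAt)
    fun x hx => ccWeight_deriv_neg (hne (interior_subset hx))

theorem StrictAntiOn.compl_singleton {α β : Type*} [LinearOrder α] [Preorder β] {f : α → β}
    {a : α} {b : β} (hl : StrictAntiOn f (Iio a)) (hr : StrictAntiOn f (Ioi a))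
    (hlb : ∀ x < a, b < f x) (hrb : ∀ x, a < x → f x < b) : StrictAntiOn f {a}ᶜ := by
  intro x hx y hy hxy
  rcases (mem_compl_singleton_iff.1 hx).lt_or_gt with hxa | hax <;>
  rcases (mem_compl_singleton_iff.1 hy).lt_or_gt with hya | hay
  · exact hl hxa hya hxy
  · exact (hrb y hay).trans (hlb x hxa)
  · exact absurd (hxy.trans hya) hax.not_gt
  · exact hr hax hay hxy

theorem strictAntiOn_ccWeight : StrictAntiOn ccWeight {0}ᶜ :=
  (strictAntiOn_ccWeight_of_convex (convex_Iio 0) (by simp)).compl_singleton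
    (strictAntiOn_ccWeight_of_convex (convex_Ioi 0) (by simp))
    (fun _ => half_lt_ccWeight) fun _ => ccWeight_lt_half

theorem tendsto_ccWeight_atBot : Tendsto ccWeight atBot (nhds 1) := by
  have h := tendsto_inv_atBot_zero.add ((tendsto_exp_atBot.const_sub 1).inv₀ (by norm_num))
  unfold ccWeight
  simpa [one_div, sub_eq_add_neg] using h

theorem tendsto_ccWeight_atTop : Tendsto ccWeight atTop (nhds 0) := by
  have hden : Tendsto (fun x => 1 + -exp x) atTop atBot :=
    tendsto_atBot_add_const_left _ 1 (tendsto_neg_atTop_atBot.comp tendsto_exp_atTop)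
  have h := tendsto_inv_atTop_zero.add (tendsto_inv_atBot_zero.comp hden)
  unfold ccWeight
  simpa [one_div, sub_eq_add_neg] using h

/-- The Chang-Cooper weight δ(λ) = 1/λ + 1/(1 − e^λ) is decreasing on ℝ \ {0}, tends to 1
as λ → −∞ and to 0 as λ → +∞. -/
theorem ccWeight_monotone_limits :
    StrictAntiOn (fun lam : ℝ => 1 / lam + 1 / (1 - Real.exp lam)) {0}ᶜ ∧
      Filter.Tendsto (fun lam : ℝ => 1 / lam + 1 / (1 - Real.exp lam))
        Filter.atBot (nhds 1) ∧
      Filter.Tendsto (fun lam : ℝ => 1 / lam + 1 / (1 - Real.exp lam))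
        Filter.atTop (nhds 0) :=
  ⟨strictAntiOn_ccWeight, tendsto_ccWeight_atBot, tendsto_ccWeight_atTop⟩
end
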